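/- arXiv:2511.00763 — 4 statements merged into one kernel-verified Lean document; each statement's English description precedes it below -/
import Mathlib

section
/- Let β₀ > 0, α > 1, k ≥ 2 an integer, and θ ∈ (0,1]. Define the logarithmic gain Δ(N,k) = log θ + β₀·N·(α^(N−1) − α^(N/k − 1)). If the real number N satisfies N ≥ 1 + (1/log α)·( log(1 − 2·log θ / β₀) + (log 2)/(1 − 1/k) ), then Δ(N,k) > 0; equivalently, θ·exp(−β₀·N·α^(N/k − 1)) > exp(−β₀·N·α^(N−1)). -/
/-!
Put `A = 1 - 2 log θ / β₀ ≥ 1`. The bound on `N` says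
`(N - 1) log α ≥ log A + log 2 / (1 - 1/k)`: the first summand gives `α^(N-1) ≥ A`, the second
`α^(N-1) ≥ 2 α^(N/k-1)`. Hence `Δ ≥ log θ + β₀ α^(N-1) / 2 ≥ log θ + β₀ A / 2 = β₀ / 2 > 0`.
-/

open Real

lemma two_mul_rpow_le_rpow {α a b : ℝ} (hα : 0 < α) (h : log 2 ≤ (a - b) * log α) :
    2 * α ^ b ≤ α ^ a := by
  have htwo : 2 ≤ α ^ (a - b) := (le_rpow_iff_log_le two_pos hα).2 h
  calc 2 * α ^ b ≤ α ^ (a - b) * α ^ b := by gcongr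
    _ = α ^ a := by rw [← rpow_add hα, sub_add_cancel]

lemma log_gain_pos {β₀ t u v N : ℝ} (hβ₀ : 0 < β₀) (hN : 1 ≤ N) (hv : 0 ≤ v)
    (hu : 1 - 2 * t / β₀ ≤ u) (huv : 2 * v ≤ u) : 0 < t + β₀ * N * (u - v) :=
  have hβ₀u : β₀ - 2 * t ≤ β₀ * u := by
    have := mul_le_mul_of_nonneg_left hu hβ₀.le
    rwa [mul_sub, mul_one, mul_div_cancel₀ _ hβ₀.ne'] at this
  calc 0 < β₀ / 2 := half_pos hβ₀
    _ ≤ t + β₀ * (u - v) := by linarith [mul_le_mul_of_nonneg_left huv hβ₀.le]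
    _ ≤ t + β₀ * N * (u - v) := by
      gcongr
      · linarith
      · exact le_mul_of_one_le_right hβ₀.le hN

lemma exp_neg_lt_mul_exp_neg {θ x y : ℝ} (hθ : 0 < θ) (h : 0 < log θ + (x - y)) :
    exp (-x) < θ * exp (-y) := by
  rw [← exp_log hθ, ← exp_add]
  exact exp_lt_exp.2 (by linarith)

/-- Advantage of divide-and-conquer: if `N` exceeds the bound
`1 + (1/log α)·(log(1 - 2 log θ / β₀) + log 2 / (1 - 1/k))`, then the logarithmic gain
`Δ(N,k) = log θ + β₀·N·(α^(N−1) − α^(N/k−1))` is positive; equivalently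
`SAR_DC(N,k) = θ·exp(−β₀·N·α^(N/k−1)) > exp(−β₀·N·α^(N−1)) = SAR(N)`. -/
theorem divide_and_conquer_gain (β₀ α θ : ℝ) (hβ₀ : 0 < β₀) (hα : 1 < α)
    (k : ℕ) (hk : 2 ≤ k) (hθ0 : 0 < θ) (hθ1 : θ ≤ 1) (N : ℝ)
    (hN : N ≥ 1 + (1 / Real.log α) *
      (Real.log (1 - 2 * Real.log θ / β₀) + Real.log 2 / (1 - 1 / (k : ℝ)))) :
    Real.log θ + β₀ * N * (α ^ (N - 1) - α ^ (N / (k : ℝ) - 1)) > 0 ∧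
    θ * Real.exp (-(β₀ * N * α ^ (N / (k : ℝ) - 1))) >
      Real.exp (-(β₀ * N * α ^ (N - 1))) := by
  set A := 1 - 2 * log θ / β₀
  set q := 1 - 1 / (k : ℝ)
  have hα0 : 0 < α := by linarith
  have hL : 0 < log α := log_pos hα
  have hq : 0 < q := by
    have : 1 / (k : ℝ) < 1 := (div_lt_one (by positivity)).2 (by exact_mod_cast hk)
    linarith
  have hA : 1 ≤ A := by
    have : 2 * log θ / β₀ ≤ 0 :=
      div_nonpos_of_nonpos_of_nonneg (by linarith [log_nonpos hθ0.le hθ1]) hβ₀.le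
    linarith
  have hlogA : 0 ≤ log A := log_nonneg hA
  have hlog2q : 0 < log 2 / q := div_pos (log_pos one_lt_two) hq
  have hbound : log A + log 2 / q ≤ (N - 1) * log α := by
    rw [← div_le_iff₀ hL, ← one_div_mul_eq_div]
    linarith
  have hN1 : 1 ≤ N :=
    sub_nonneg.1 (nonneg_of_mul_nonneg_left (by linarith) hL)
  have hpow : A ≤ α ^ (N - 1) := (le_rpow_iff_log_le (by linarith) hα0).2 (by linarith)
  have hsplit : 2 * α ^ (N / k - 1) ≤ α ^ (N - 1) := by
    refine two_mul_rpow_le_rpow hα0 ?_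
    have : log 2 ≤ (N - 1) * log α * q := (div_le_iff₀ hq).1 (by linarith)
    rw [show N - 1 - (N / k - 1) = N * q by ring]
    nlinarith [mul_pos hL hq]
  have hΔ := log_gain_pos hβ₀ hN1 (rpow_nonneg hα0.le _) hpow hsplit
  exact ⟨hΔ, exp_neg_lt_mul_exp_neg hθ0 (by linarith)⟩
end

section
/- Let β₀ > 0, α > 1, k ≥ 2 an integer, θ ∈ (0,1], and let N be a real number such that (i) N > 1, (ii) 1 − α^(N/k − N) > 1/2, and (iii) (1/2)·β₀·α^(N−1) > −log θ. Then log θ + β₀·N·(α^(N−1) − α^(N/k − 1)) > 0. -/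
/-! Factor `α^(N-1) - α^(N/k-1) = α^(N-1) (1 - α^(N/k-N))`: by (ii) the gain exceeds
`log θ + β₀ N α^(N-1) / 2`, which is at least `log θ + β₀ α^(N-1) / 2 > 0` by (i) and (iii). -/

lemma Real.rpow_sub_rpow_eq_mul_one_sub_rpow {α : ℝ} (hα : 0 < α) (a b : ℝ) :
    α ^ a - α ^ b = α ^ a * (1 - α ^ (b - a)) := by
  rw [mul_one_sub, ← Real.rpow_add hα, add_sub_cancel]

theorem gain_pos_of_three_bounds_general (β₀ α θ : ℝ) (hβ₀ : 0 < β₀) (hα : 1 < α)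
    (k : ℕ) (N : ℝ)
    (h1 : N > 1)
    (h2 : 1 - α ^ (N / (k : ℝ) - N) > 1 / 2)
    (h3 : (1 / 2) * β₀ * α ^ (N - 1) > -Real.log θ) :
    Real.log θ + β₀ * N * (α ^ (N - 1) - α ^ (N / (k : ℝ) - 1)) > 0 := by
  have hα0 : 0 < α := zero_lt_one.trans hα
  have hP : 0 < α ^ (N - 1) := Real.rpow_pos_of_pos hα0 _
  have hgap : α ^ (N - 1) / 2 < α ^ (N - 1) - α ^ (N / (k : ℝ) - 1) := by
    rw [Real.rpow_sub_rpow_eq_mul_one_sub_rpow hα0, sub_sub_sub_cancel_right]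
    nlinarith
  calc 0 < Real.log θ + β₀ * 1 * (α ^ (N - 1) / 2) := by linarith
    _ ≤ Real.log θ + β₀ * N * (α ^ (N - 1) / 2) := by gcongr
    _ < Real.log θ + β₀ * N * (α ^ (N - 1) - α ^ (N / (k : ℝ) - 1)) := by gcongr

/-- If `β₀ > 0`, `α > 1`, `k ≥ 2`, `θ ∈ (0,1]`, and the real number `N` satisfies
(i) `N > 1`, (ii) `1 − α^(N/k−N) > 1/2`, (iii) `(1/2)·β₀·α^(N−1) > −log θ`,
then the logarithmic gain `log θ + β₀·N·(α^(N−1) − α^(N/k−1))` is positive. -/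
theorem gain_pos_of_three_bounds (β₀ α θ : ℝ) (hβ₀ : 0 < β₀) (hα : 1 < α)
    (k : ℕ) (hk : 2 ≤ k) (hθ0 : 0 < θ) (hθ1 : θ ≤ 1) (N : ℝ)
    (h1 : N > 1)
    (h2 : 1 - α ^ (N / (k : ℝ) - N) > 1 / 2)
    (h3 : (1 / 2) * β₀ * α ^ (N - 1) > -Real.log θ) :
    Real.log θ + β₀ * N * (α ^ (N - 1) - α ^ (N / (k : ℝ) - 1)) > 0 :=
  gain_pos_of_three_bounds_general β₀ α θ hβ₀ hα k N h1 h2 h3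
end

section
/- Let p_σ, p_φ ∈ [0,1] and let N be a positive natural number. Suppose the per-site Pauli-multiplication outcomes and the per-site phase errors are all mutually independent: each of the N sites is multiplied correctly with probability 1 − p_σ, and each phase error ε_i ∈ ℤ/4ℤ satisfies P(ε_i = 0) = 1 − p_φ and P(ε_i = g) = p_φ/3 for each nonzero g. Then the probability that all N sites are multiplied correctly and simultaneously ε₁ + ⋯ + ε_N = 0 equals (1 − p_σ)^N · ( 1/4 + (3/4)·((3 − 4p_φ)/3)^N ). -/
/-!
By independence, the atom on which every site is multiplied correctly and the phase errors
equal `x` has probability `(1 - p_σ)^N ∏ w (x i)`, where `w` is the law of one phase error; so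
the answer is `(1 - p_σ)^N` times the `N`-fold convolution of `w` evaluated at `0`. Writing
`w = r δ₀ + (1 - r) · uniform` with `r = (3 - 4 p_φ) / 3`, the uniform law absorbs under
convolution, so the `N`-fold convolution is `r^N δ₀ + (1 - r^N) · uniform`.

The outcomes are not assumed measurable, so `μ` is only an outer measure on these events. The
phase atoms cover `Ω` and their outer measures add up to `1`, which forces each of them to be
null-measurable; that is all the additivity the computation needs.
-/

open MeasureTheory ProbabilityTheory Set

universe u

theorem preimage_pi_singleton {Ω ι γ : Type*} (ε : ι → Ω → γ) (x : ι → γ) :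
    (fun ω i => ε i ω) ⁻¹' {x} = ⋂ i, ε i ⁻¹' {x i} := by
  ext ω
  simp [funext_iff]

section NullMeasurable

variable {Ω α : Type*} [MeasurableSpace Ω] {μ : Measure Ω}

theorem nullMeasurableSet_of_measure_add_measure_compl_le [IsFiniteMeasure μ] {s : Set Ω}
    (h : μ s + μ sᶜ ≤ μ univ) : NullMeasurableSet s μ := by
  have hs := subset_toMeasurable μ s
  have hsc := subset_toMeasurable μ sᶜ
  have hcover : toMeasurable μ s ∪ toMeasurable μ sᶜ = univ :=
    eq_univ_of_forall fun ω => (em (ω ∈ s)).imp (hs ·) (hsc ·)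
  have hoverlap : μ (toMeasurable μ s ∩ toMeasurable μ sᶜ) = 0 := by
    have := measure_union_add_inter (μ := μ) (toMeasurable μ s) (measurableSet_toMeasurable μ sᶜ)
    rw [hcover, measure_toMeasurable, measure_toMeasurable] at this
    exact nonpos_iff_eq_zero.mp <| ENNReal.le_of_add_le_add_left (measure_ne_top μ univ)
      (by rw [add_zero, this]; exact h)
  have hae : toMeasurable μ s =ᵐ[μ] s := ae_eq_set.mpr
    ⟨measure_mono_null (fun ω (hω : ω ∈ toMeasurable μ s \ s) => mem_inter hω.1 (hsc hω.2))
      hoverlap, by simp [sdiff_eq_empty.mpr hs]⟩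
  exact (measurableSet_toMeasurable μ s).nullMeasurableSet.congr hae

theorem nullMeasurableSet_preimage_singleton_of_sum_le [Fintype α] [IsFiniteMeasure μ]
    {Y : Ω → α} (h : ∑ a, μ (Y ⁻¹' {a}) ≤ μ univ) (a : α) :
    NullMeasurableSet (Y ⁻¹' {a}) μ := by
  classical
  refine nullMeasurableSet_of_measure_add_measure_compl_le (le_trans ?_ h)
  rw [← Finset.add_sum_erase _ _ (Finset.mem_univ a)]
  gcongr
  calc μ (Y ⁻¹' {a})ᶜ = μ (⋃ b ∈ Finset.univ.erase a, Y ⁻¹' {b}) := by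
        congr 1; ext ω; simp
    _ ≤ _ := measure_biUnion_finset_le _ _

theorem measure_inter_preimage_finset [DecidableEq α] (t : Set Ω) {Y : Ω → α} (s : Finset α)
    (hY : ∀ a ∈ s, NullMeasurableSet (Y ⁻¹' {a}) μ) :
    μ (t ∩ Y ⁻¹' s) = ∑ a ∈ s, μ (t ∩ Y ⁻¹' {a}) := by
  induction s using Finset.induction_on with
  | empty => simp
  | insert a s ha ih =>
    rw [Finset.sum_insert ha, ← ih fun b hb => hY b (Finset.mem_insert_of_mem hb),
      ← measure_inter_add_sdiff₀ _ (hY a (Finset.mem_insert_self a s))]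
    congr 2 <;> ext ω
    · simp only [mem_inter_iff, mem_preimage, Finset.coe_insert, mem_insert_iff,
        mem_singleton_iff]
      tauto
    · simp only [mem_inter_iff, mem_sdiff, mem_preimage, Finset.coe_insert, mem_insert_iff,
        mem_singleton_iff, Finset.mem_coe]
      constructor
      · rintro ⟨⟨ht, rfl | hs⟩, hne⟩
        exacts [absurd rfl hne, ⟨ht, hs⟩]
      · rintro ⟨ht, hs⟩
        exact ⟨⟨ht, Or.inr hs⟩, fun h => ha (h ▸ hs)⟩

theorem nullMeasurableSet_iInter_preimage_singleton {ι γ : Type*} [Fintype ι] [DecidableEq ι]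
    [Fintype γ] [IsProbabilityMeasure μ] {ε : ι → Ω → γ}
    (hprod : ∀ x : ι → γ, μ (⋂ i, ε i ⁻¹' {x i}) = ∏ i, μ (ε i ⁻¹' {x i}))
    (hsum : ∀ i, ∑ g, μ (ε i ⁻¹' {g}) ≤ 1) (x : ι → γ) :
    NullMeasurableSet (⋂ i, ε i ⁻¹' {x i}) μ := by
  rw [← preimage_pi_singleton]
  refine nullMeasurableSet_preimage_singleton_of_sum_le ?_ x
  calc ∑ x, μ ((fun ω i => ε i ω) ⁻¹' {x}) = ∑ x : ι → γ, ∏ i, μ (ε i ⁻¹' {x i}) := by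
        simp only [preimage_pi_singleton, hprod]
    _ = ∏ i, ∑ g, μ (ε i ⁻¹' {g}) := (Fintype.prod_sum fun i g => μ (ε i ⁻¹' {g})).symm
    _ ≤ 1 := Finset.prod_le_one' fun i _ => hsum i
    _ = μ univ := measure_univ.symm

end NullMeasurable

theorem ProbabilityTheory.iIndepFun.measure_inter_preimage_sum {Ω ι κ : Type*} {β γ : Type u}
    [MeasurableSpace Ω] {μ : Measure Ω} [Fintype ι] [Fintype κ]
    {mβ : MeasurableSpace β} {mγ : MeasurableSpace γ} {X : ι → Ω → β} {ε : κ → Ω → γ}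
    (h : iIndepFun
      (m := fun j : ι ⊕ κ =>
        (Sum.rec (motive := fun j => MeasurableSpace (Sum.elim (fun _ => β) (fun _ => γ) j))
          (fun _ => mβ) (fun _ => mγ) j))
      (fun j : ι ⊕ κ =>
        (Sum.rec (motive := fun j => Ω → Sum.elim (fun _ => β) (fun _ => γ) j)
          (fun i => X i) (fun k => ε k) j)) μ)
    {B : ι → Set β} {C : κ → Set γ} (hB : ∀ i, MeasurableSet (B i))
    (hC : ∀ k, MeasurableSet (C k)) :
    μ ((⋂ i, X i ⁻¹' B i) ∩ ⋂ k, ε k ⁻¹' C k) =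
      (∏ i, μ (X i ⁻¹' B i)) * ∏ k, μ (ε k ⁻¹' C k) := by
  have := h.measure_inter_preimage_eq_mul (S := Finset.univ)
    (sets := fun j => Sum.rec (motive := fun j => Set (Sum.elim (fun _ => β) (fun _ => γ) j))
      B C j)
    (fun j _ => by cases j; exacts [hB _, hC _])
  rw [Fintype.prod_sum_type] at this
  refine (congrArg μ ?_).trans this
  ext ω
  simp only [mem_inter_iff, mem_iInter, Finset.mem_univ, forall_const, mem_preimage, Sum.forall]
  rfl

theorem sum_fun_fin_succ {α M : Type*} [Fintype α] [AddCommMonoid M] {n : ℕ}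
    (f : (Fin (n + 1) → α) → M) :
    ∑ x, f x = ∑ a, ∑ y : Fin n → α, f (Fin.cons a y) := by
  rw [← (Fin.consEquiv fun _ => α).sum_comp, Fintype.sum_prod_type]
  rfl

section Convolution

variable {G R : Type*} [AddCommGroup G] [Fintype G] [DecidableEq G]

theorem sum_ite_sum_eq_succ [CommSemiring R] (w : G → R) (n : ℕ) (g : G) :
    ∑ x : Fin (n + 1) → G, (if ∑ i, x i = g then ∏ i, w (x i) else 0) =
      ∑ a, w a * ∑ y : Fin n → G, if ∑ i, y i = g - a then ∏ i, w (y i) else 0 := by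
  rw [sum_fun_fin_succ]
  refine Finset.sum_congr rfl fun a _ => ?_
  rw [Finset.mul_sum]
  refine Finset.sum_congr rfl fun y _ => ?_
  simp only [Fin.sum_univ_succ, Fin.prod_univ_succ, Fin.cons_zero, Fin.cons_succ,
    eq_sub_iff_add_eq', mul_ite, mul_zero]

variable [Field R] [CharZero R]

theorem sum_eq_one_of_eq_mix (r : R) {w : G → R}
    (hw : ∀ g, w g = r * (if g = 0 then 1 else 0) + (1 - r) / Fintype.card G) :
    ∑ g, w g = 1 := by
  have hcard : (Fintype.card G : R) ≠ 0 := Nat.cast_ne_zero.mpr Fintype.card_ne_zero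
  simp only [hw, Finset.sum_add_distrib, ← Finset.mul_sum, Finset.sum_ite_eq',
    Finset.mem_univ, if_true, Finset.sum_const, Finset.card_univ, nsmul_eq_mul]
  field_simp
  ring

theorem sum_ite_sum_eq_of_eq_mix (r : R) {w : G → R}
    (hw : ∀ g, w g = r * (if g = 0 then 1 else 0) + (1 - r) / Fintype.card G) (n : ℕ) (g : G) :
    ∑ x : Fin n → G, (if ∑ i, x i = g then ∏ i, w (x i) else 0) =
      r ^ n * (if g = 0 then 1 else 0) + (1 - r ^ n) / Fintype.card G := by
  induction n generalizing g with
  | zero => simp [eq_comm]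
  | succ n ih =>
    simp only [sum_ite_sum_eq_succ, ih, sub_eq_zero, mul_add, Finset.sum_add_distrib,
      ← Finset.sum_mul, sum_eq_one_of_eq_mix r hw, mul_ite, mul_one, mul_zero,
      Finset.sum_ite_eq, Finset.mem_univ, if_true, hw g]
    split_ifs <;> ring

end Convolution

theorem toReal_measure_preimage_singleton_eq_mix {Ω : Type*} [MeasurableSpace Ω]
    {μ : Measure Ω} {p : ℝ} {e : Ω → ZMod 4} (h0 : (μ {ω | e ω = 0}).toReal = 1 - p)
    (hg : ∀ g : ZMod 4, g ≠ 0 → (μ {ω | e ω = g}).toReal = p / 3) (g : ZMod 4) :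
    (μ (e ⁻¹' {g})).toReal = (3 - 4 * p) / 3 * (if g = 0 then 1 else 0) +
      (1 - (3 - 4 * p) / 3) / Fintype.card (ZMod 4) := by
  rw [ZMod.card]
  by_cases hg0 : g = 0
  · rw [if_pos hg0, hg0, show e ⁻¹' {0} = {ω | e ω = 0} from rfl, h0]
    ring
  · rw [if_neg hg0, show e ⁻¹' {g} = {ω | e ω = g} from rfl, hg g hg0]
    ring

theorem pauli_string_SAR_general {Ω : Type*} [MeasurableSpace Ω]
    (μ : Measure Ω) [IsProbabilityMeasure μ]
    (pσ pφ : ℝ)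
    (N : ℕ)
    (X : Fin N → Ω → Bool) (ε : Fin N → Ω → ZMod 4)
    (hindep : iIndepFun
      (m := fun j : Fin N ⊕ Fin N =>
        (Sum.rec (motive := fun j => MeasurableSpace (Sum.elim (fun _ => Bool) (fun _ => ZMod 4) j))
          (fun _ => (⊤ : MeasurableSpace Bool)) (fun _ => (⊤ : MeasurableSpace (ZMod 4))) j))
      (fun j : Fin N ⊕ Fin N =>
        (Sum.rec (motive := fun j => Ω → Sum.elim (fun _ => Bool) (fun _ => ZMod 4) j)
          (fun i => X i) (fun i => ε i) j)) μ)
    (hX : ∀ i, (μ {ω | X i ω = true}).toReal = 1 - pσ)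
    (h0 : ∀ i, (μ {ω | ε i ω = 0}).toReal = 1 - pφ)
    (hg : ∀ i, ∀ g : ZMod 4, g ≠ 0 → (μ {ω | ε i ω = g}).toReal = pφ / 3) :
    (μ {ω | (∀ i, X i ω = true) ∧ ∑ i, ε i ω = 0}).toReal =
      (1 - pσ) ^ N * (1 / 4 + 3 / 4 * ((3 - 4 * pφ) / 3) ^ N) := by
  classical
  set r : ℝ := (3 - 4 * pφ) / 3
  obtain ⟨w, hw⟩ : ∃ w : ZMod 4 → ℝ, ∀ g,
      w g = r * (if g = 0 then 1 else 0) + (1 - r) / Fintype.card (ZMod 4) := ⟨_, fun _ => rfl⟩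
  have hε : ∀ i g, (μ (ε i ⁻¹' {g})).toReal = w g := fun i g =>
    (toReal_measure_preimage_singleton_eq_mix (h0 i) (hg i) g).trans (hw g).symm
  have hX' : ∀ i, (μ (X i ⁻¹' {true})).toReal = 1 - pσ := hX
  have hatom : ∀ (t : Set Bool) (x : Fin N → ZMod 4),
      μ ((⋂ i, X i ⁻¹' t) ∩ ⋂ i, ε i ⁻¹' {x i}) =
        (∏ i, μ (X i ⁻¹' t)) * ∏ i, μ (ε i ⁻¹' {x i}) := fun _ _ =>
    hindep.measure_inter_preimage_sum (fun _ => MeasurableSpace.measurableSet_top)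
      (fun _ => MeasurableSpace.measurableSet_top)
  have hphase : ∀ i, ∑ g, μ (ε i ⁻¹' {g}) = 1 := by
    intro i
    rw [← ENNReal.toReal_eq_one_iff, ENNReal.toReal_sum fun g _ => measure_ne_top _ _]
    simp only [hε]
    exact sum_eq_one_of_eq_mix r hw
  have hnull : ∀ x, NullMeasurableSet ((fun ω i => ε i ω) ⁻¹' {x}) μ := fun x => by
    rw [preimage_pi_singleton]
    refine nullMeasurableSet_iInter_preimage_singleton (fun x => ?_) (fun i => (hphase i).le) x
    simpa only [preimage_univ, iInter_univ, univ_inter, measure_univ, Finset.prod_const_one,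
      one_mul] using hatom univ x
  have hE : {ω | (∀ i, X i ω = true) ∧ ∑ i, ε i ω = 0} = (⋂ i, X i ⁻¹' {true}) ∩
      (fun ω i => ε i ω) ⁻¹' ↑(Finset.univ.filter fun x : Fin N → ZMod 4 => ∑ i, x i = 0) := by
    ext ω; simp
  rw [hE, measure_inter_preimage_finset _ _ fun x _ => hnull x,
    ENNReal.toReal_sum fun x _ => measure_ne_top _ _]
  simp only [preimage_pi_singleton, hatom, ENNReal.toReal_mul, ENNReal.toReal_prod, hε, hX',
    Finset.prod_const, Finset.card_univ, Fintype.card_fin]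
  rw [← Finset.mul_sum, Finset.sum_filter, sum_ite_sum_eq_of_eq_mix r hw, ZMod.card, if_pos rfl]
  push_cast
  ring

/-- SAR of the Pauli-string task: if the `N` per-site multiplication outcomes
`X i : Ω → Bool` (correct with probability `1 − p_σ`) and the `N` per-site phase errors
`ε i : Ω → ℤ/4ℤ` (with `P(ε = 0) = 1 − p_φ`, `P(ε = g) = p_φ/3` for `g ≠ 0`) are all
mutually independent, then the probability that all sites are multiplied correctly and
the phase errors sum to zero equals `(1−p_σ)^N·(1/4 + (3/4)·((3−4p_φ)/3)^N)`. -/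
theorem pauli_string_SAR {Ω : Type*} [MeasurableSpace Ω]
    (μ : Measure Ω) [IsProbabilityMeasure μ]
    (pσ pφ : ℝ) (hpσ0 : 0 ≤ pσ) (hpσ1 : pσ ≤ 1) (hpφ0 : 0 ≤ pφ) (hpφ1 : pφ ≤ 1)
    (N : ℕ) (hN : 0 < N)
    (X : Fin N → Ω → Bool) (ε : Fin N → Ω → ZMod 4)
    (hindep : iIndepFun
      (m := fun j : Fin N ⊕ Fin N =>
        (Sum.rec (motive := fun j => MeasurableSpace (Sum.elim (fun _ => Bool) (fun _ => ZMod 4) j))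
          (fun _ => (⊤ : MeasurableSpace Bool)) (fun _ => (⊤ : MeasurableSpace (ZMod 4))) j))
      (fun j : Fin N ⊕ Fin N =>
        (Sum.rec (motive := fun j => Ω → Sum.elim (fun _ => Bool) (fun _ => ZMod 4) j)
          (fun i => X i) (fun i => ε i) j)) μ)
    (hX : ∀ i, (μ {ω | X i ω = true}).toReal = 1 - pσ)
    (h0 : ∀ i, (μ {ω | ε i ω = 0}).toReal = 1 - pφ)
    (hg : ∀ i, ∀ g : ZMod 4, g ≠ 0 → (μ {ω | ε i ω = g}).toReal = pφ / 3) :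
    (μ {ω | (∀ i, X i ω = true) ∧ ∑ i, ε i ω = 0}).toReal =
      (1 - pσ) ^ N * (1 / 4 + 3 / 4 * ((3 - 4 * pφ) / 3) ^ N) :=
  pauli_string_SAR_general μ pσ pφ N X ε hindep hX h0 hg
end

section
/- Let N, n be natural numbers and h a real number, and let m = tanh h. Equip {−1,+1}^{{1,…,N}×{1,…,n}} with the product Gibbs measure with weight proportional to exp( h·∑_{i,a} s_i^a ). Then the second moment of the plaquette sum satisfies E[ ( ∑_{1≤i<j≤N} ∑_{1≤a<b≤n} s_i^a s_j^a s_i^b s_j^b )² ] = N·(N−1)·n·(n−1)·[ 1/4 + (1/2)·(N + n − 4)·m⁴ + (N−2)·(n−2)·m⁶ + (1/4)·( (1/4)·N·(N−1)·n·(n−1) − (2N−3)·(2n−3) )·m⁸ ]. -/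
/-- The spin values `{−1, +1}` as a subtype of `ℤ`. -/
abbrev Spin : Type := ({-1, 1} : Finset ℤ)

/-- The real value of a spin. -/
def spinVal (x : Spin) : ℝ := (x : ℤ)

/-- The Gibbs weight `exp(h·∑_{i,a} sᵢᵃ)` of a replicated configuration. -/
noncomputable def gibbsWeight (h : ℝ) (N n : ℕ) (s : Fin N → Fin n → Spin) : ℝ :=
  Real.exp (h * ∑ i : Fin N, ∑ a : Fin n, spinVal (s i a))

/-- The plaquette sum `∑_{i<j} ∑_{a<b} sᵢᵃ sⱼᵃ sᵢᵇ sⱼᵇ`. -/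
def plaquetteSum (N n : ℕ) (s : Fin N → Fin n → Spin) : ℝ :=
  ∑ i : Fin N, ∑ j ∈ Finset.Ioi i, ∑ a : Fin n, ∑ b ∈ Finset.Ioi a,
    spinVal (s i a) * spinVal (s j a) * spinVal (s i b) * spinVal (s j b)

/-!
Under the product measure the spins are independent with mean `m = tanh h`, so the monomial
`∏_{c ∈ S} s_c` has expectation `m ^ #S`. Since `s² = 1`, the product of the monomials of two
plaquettes `P × Q` and `P' × Q'` is the monomial of their symmetric difference, which has
`8 - 2 #(P ∩ P') #(Q ∩ Q')` sites. The second moment is therefore `∑ m ^ (8 - 2 r c)` over pairs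
of plaquettes, and it remains to count pairs of `2`-subsets of an `M`-element set by the size of
their intersection. Expanding a function of `r ∈ {0, 1, 2}` in the basis `choose r j` (Newton
interpolation) reduces this to `∑_{P, P'} choose #(P ∩ P') j = choose M j * choose (M - j) (2 - j) ^ 2`,
a double count of the `j`-subsets contained in both `P` and `P'`.
-/

open Finset
open scoped symmDiff

lemma spinVal_mul_self (x : Spin) : spinVal x * spinVal x = 1 := by
  obtain ⟨x, hx⟩ := x
  rcases mem_insert.1 hx with rfl | hx
  · norm_num [spinVal]
  · norm_num [spinVal, mem_singleton.1 hx]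

lemma sum_spin (F : ℝ → ℝ) : ∑ x : Spin, F (spinVal x) = F (-1) + F 1 := by
  change ∑ x : Spin, F ((x : ℤ) : ℝ) = _
  rw [univ_eq_attach, sum_attach _ (fun z : ℤ => F z), sum_pair (by norm_num)]
  push_cast; rfl

lemma sum_exp_mul_ite_spinVal (h : ℝ) (p : Prop) [Decidable p] :
    ∑ x : Spin, Real.exp (h * spinVal x) * (if p then spinVal x else 1) =
      (if p then Real.tanh h else 1) * (2 * Real.cosh h) := by
  rw [sum_spin (fun x => Real.exp (h * x) * if p then x else 1)]
  split_ifs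
  · rw [Real.tanh_eq_sinh_div_cosh, div_mul_eq_mul_div, mul_div_assoc,
      mul_div_cancel_right₀ _ (Real.cosh_pos h).ne', Real.sinh_eq]
    simp only [mul_neg_one, mul_one]; ring
  · rw [Real.cosh_eq]; simp only [mul_neg_one, mul_one]; ring

lemma Finset.prod_mul_prod_eq_prod_symmDiff {ι M : Type*} [DecidableEq ι] [CommMonoid M]
    {f : ι → M} (hf : ∀ i, f i * f i = 1) (s t : Finset ι) :
    (∏ i ∈ s, f i) * ∏ i ∈ t, f i = ∏ i ∈ s ∆ t, f i := by
  rw [← prod_inter_mul_prod_sdiff s t, ← prod_inter_mul_prod_sdiff t s, inter_comm t s,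
    Finset.symmDiff_def, prod_union disjoint_sdiff_sdiff]
  have hsq : (∏ i ∈ s ∩ t, f i) * ∏ i ∈ s ∩ t, f i = 1 := by
    rw [← prod_mul_distrib]; exact prod_eq_one fun i _ => hf i
  rw [mul_mul_mul_comm, hsq, one_mul]

section SpinSystem

variable {ι : Type*} [DecidableEq ι]

def spinMonomial (S : Finset ι) (s : ι → Spin) : ℝ :=
  ∏ c ∈ S, spinVal (s c)

lemma spinMonomial_mul_spinMonomial (S T : Finset ι) (s : ι → Spin) :
    spinMonomial S s * spinMonomial T s = spinMonomial (S ∆ T) s :=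
  prod_mul_prod_eq_prod_symmDiff (fun c => spinVal_mul_self (s c)) S T

variable [Fintype ι]

noncomputable def spinWeight (h : ℝ) (s : ι → Spin) : ℝ :=
  ∏ c, Real.exp (h * spinVal (s c))

lemma sum_spinWeight_mul_spinMonomial (h : ℝ) (S : Finset ι) :
    ∑ s, spinWeight h s * spinMonomial S s =
      Real.tanh h ^ #S * (2 * Real.cosh h) ^ Fintype.card ι := by
  have hfactor : ∀ s : ι → Spin, spinWeight h s * spinMonomial S s =
      ∏ c, Real.exp (h * spinVal (s c)) * (if c ∈ S then spinVal (s c) else 1) := by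
    intro s
    rw [prod_mul_distrib, prod_ite_mem, univ_inter]
    rfl
  rw [sum_congr rfl fun s _ => hfactor s,
    ← Fintype.prod_sum fun c x => Real.exp (h * spinVal x) * if c ∈ S then spinVal x else 1]
  simp only [sum_exp_mul_ite_spinVal]
  rw [prod_mul_distrib, prod_ite_mem, univ_inter, prod_const, prod_const, card_univ]

lemma sum_spinWeight (h : ℝ) :
    ∑ s : ι → Spin, spinWeight h s = (2 * Real.cosh h) ^ Fintype.card ι := by
  simpa [spinMonomial] using sum_spinWeight_mul_spinMonomial (ι := ι) h ∅

lemma sum_spinWeight_mul_sq_sum_spinMonomial {κ : Type*} (h : ℝ) (P : Finset κ)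
    (A : κ → Finset ι) :
    ∑ s, spinWeight h s * (∑ x ∈ P, spinMonomial (A x) s) ^ 2 =
      (∑ x ∈ P, ∑ y ∈ P, Real.tanh h ^ #(A x ∆ A y)) * (2 * Real.cosh h) ^ Fintype.card ι := by
  calc ∑ s, spinWeight h s * (∑ x ∈ P, spinMonomial (A x) s) ^ 2
      = ∑ s, ∑ x ∈ P, ∑ y ∈ P, spinWeight h s * spinMonomial (A x ∆ A y) s := by
        refine sum_congr rfl fun s _ => ?_
        rw [sq, sum_mul_sum, mul_sum]
        simp only [mul_sum, spinMonomial_mul_spinMonomial]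
    _ = ∑ x ∈ P, ∑ y ∈ P, ∑ s, spinWeight h s * spinMonomial (A x ∆ A y) s := by
        rw [sum_comm]; exact sum_congr rfl fun x _ => sum_comm
    _ = _ := by simp only [sum_spinWeight_mul_spinMonomial, sum_mul]

end SpinSystem

lemma sum_sum_choose_card_inter {α : Type*} [DecidableEq α] (t : Finset α) {j k : ℕ}
    (hjk : j ≤ k) :
    ∑ P ∈ t.powersetCard k, ∑ P' ∈ t.powersetCard k, (#(P ∩ P')).choose j =
      (#t).choose j * ((#t - j).choose (k - j)) ^ 2 := by
  have hcontain : ∀ T ∈ t.powersetCard j,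
      ∑ P ∈ t.powersetCard k, (if T ⊆ P then 1 else 0) = (#t - j).choose (k - j) := by
    intro T hT
    obtain ⟨hTt, hTj⟩ := mem_powersetCard.1 hT
    rw [← card_filter, card_filter_powersetCard_subset T t k hTt (hTj ▸ hjk), hTj]
  have hinter : ∀ P ∈ t.powersetCard k, ∀ P' ∈ t.powersetCard k, (#(P ∩ P')).choose j =
      ∑ T ∈ t.powersetCard j, (if T ⊆ P then 1 else 0) * (if T ⊆ P' then 1 else 0) := by
    intro P hP P' _
    simp only [ite_zero_mul_ite_zero, mul_one, ← subset_inter_iff]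
    rw [← card_powersetCard, ← card_filter]
    congr 1
    ext T
    simp only [mem_powersetCard, mem_filter]
    exact ⟨fun h => ⟨⟨h.1.trans (inter_subset_left.trans (mem_powersetCard.1 hP).1), h.2⟩, h.1⟩,
      fun h => ⟨h.2, h.1.2⟩⟩
  calc ∑ P ∈ t.powersetCard k, ∑ P' ∈ t.powersetCard k, (#(P ∩ P')).choose j
      = ∑ T ∈ t.powersetCard j, (∑ P ∈ t.powersetCard k, if T ⊆ P then 1 else 0) *
          ∑ P' ∈ t.powersetCard k, if T ⊆ P' then 1 else 0 := by
        rw [sum_congr rfl fun P hP => sum_congr rfl fun P' hP' => hinter P hP P' hP']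
        simp only [sum_mul_sum]
        rw [sum_comm (s := t.powersetCard j)]
        exact sum_congr rfl fun P _ => sum_comm
    _ = _ := by
        rw [sum_congr rfl fun T hT => congrArg₂ (· * ·) (hcontain T hT) (hcontain T hT),
          sum_const, card_powersetCard, smul_eq_mul, sq]

lemma sum_sum_apply_card_inter_powersetCard_two {α R : Type*} [DecidableEq α] [CommRing R]
    (t : Finset α) (X : ℕ → R) :
    ∑ P ∈ t.powersetCard 2, ∑ P' ∈ t.powersetCard 2, X #(P ∩ P') =
      ((#t).choose 2 : R) ^ 2 * X 0 + #t * (#t - 1) ^ 2 * (X 1 - X 0) +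
        (#t).choose 2 * (X 2 - 2 * X 1 + X 0) := by
  have hnewton : ∀ r ≤ 2, X r = (r.choose 0 : R) * X 0 + (r.choose 1 : R) * (X 1 - X 0) +
      (r.choose 2 : R) * (X 2 - 2 * X 1 + X 0) := by
    intro r hr
    interval_cases r <;> simp
    ring
  have hcast : ∀ j ≤ 2, ∑ P ∈ t.powersetCard 2, ∑ P' ∈ t.powersetCard 2,
      ((#(P ∩ P')).choose j : R) = ((#t).choose j * ((#t - j).choose (2 - j)) ^ 2 : ℕ) := by
    intro j hj
    rw [← sum_sum_choose_card_inter t hj]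
    push_cast
    rfl
  rw [sum_congr rfl fun P hP => sum_congr rfl fun P' _ => hnewton _
    ((card_le_card inter_subset_left).trans (mem_powersetCard.1 hP).2.le)]
  simp only [sum_add_distrib, ← sum_mul, hcast 0 (by norm_num), hcast 1 (by norm_num),
    hcast 2 le_rfl]
  rcases Nat.eq_zero_or_pos #t with ht | ht
  · simp [ht]
  · simp [Nat.cast_sub ht]

lemma sum_Ioi_eq_sum_powersetCard_two {α M : Type*} [LinearOrder α] [Fintype α]
    [LocallyFiniteOrderTop α] [AddCommMonoid M] (g : Finset α → M) :
    ∑ i, ∑ j ∈ Ioi i, g {i, j} = ∑ P ∈ (univ : Finset α).powersetCard 2, g P := by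
  rw [sum_sigma']
  refine sum_bij (fun x _ => {x.1, x.2}) ?_ ?_ ?_ fun _ _ => rfl
  · rintro ⟨i, j⟩ hij
    simp only [mem_sigma, mem_univ, mem_Ioi, true_and] at hij
    simp [card_pair hij.ne]
  · rintro ⟨i, j⟩ hij ⟨k, l⟩ hkl heq
    simp only [mem_sigma, mem_univ, mem_Ioi, true_and] at hij hkl
    have hpair := Set.pair_eq_pair_iff.1 <| by
      simpa only [coe_pair] using congrArg ((↑) : Finset α → Set α) heq
    rcases hpair with ⟨rfl, rfl⟩ | ⟨rfl, rfl⟩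
    · rfl
    · exact absurd (hij.trans hkl) (lt_irrefl i)
  · intro P hP
    obtain ⟨x, y, hxy, rfl⟩ := card_eq_two.1 (mem_powersetCard.1 hP).2
    rcases hxy.lt_or_gt with h | h
    · exact ⟨⟨x, y⟩, by simpa using h, rfl⟩
    · exact ⟨⟨y, x⟩, by simpa using h, pair_comm y x⟩

lemma card_product_symmDiff_product {α β : Type*} [DecidableEq α] [DecidableEq β]
    {P P' : Finset α} {Q Q' : Finset β} (hP : #P = 2) (hP' : #P' = 2) (hQ : #Q = 2)
    (hQ' : #Q' = 2) :
    #((P ×ˢ Q) ∆ (P' ×ˢ Q')) = 8 - 2 * (#(P ∩ P') * #(Q ∩ Q')) := by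
  have h := card_sdiff_add_card_inter (P ×ˢ Q) (P' ×ˢ Q')
  have h' := card_sdiff_add_card_inter (P' ×ˢ Q') (P ×ˢ Q)
  rw [inter_comm (P' ×ˢ Q')] at h'
  rw [product_inter_product, card_product, card_product] at h h'
  rw [Finset.symmDiff_def, card_union_of_disjoint disjoint_sdiff_sdiff]
  rw [hP, hQ] at h
  rw [hP', hQ'] at h'
  omega

lemma sum_sum_pow_card_product_symmDiff_product {α β K : Type*} [DecidableEq α] [DecidableEq β]
    [Field K] [CharZero K] (s : Finset α) (t : Finset β) (m : K) :
    ∑ x ∈ s.powersetCard 2 ×ˢ t.powersetCard 2, ∑ y ∈ s.powersetCard 2 ×ˢ t.powersetCard 2,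
        m ^ #((x.1 ×ˢ x.2) ∆ (y.1 ×ˢ y.2)) =
      (#s : K) * (#s - 1) * #t * (#t - 1) *
        (1 / 4 + (1 / 2) * ((#s : K) + #t - 4) * m ^ 4 + ((#s : K) - 2) * ((#t : K) - 2) * m ^ 6 +
          (1 / 4) * ((1 / 4) * #s * (#s - 1) * #t * (#t - 1) -
            (2 * (#s : K) - 3) * (2 * (#t : K) - 3)) * m ^ 8) := by
  calc _ = ∑ P ∈ s.powersetCard 2, ∑ P' ∈ s.powersetCard 2, ∑ Q ∈ t.powersetCard 2,
        ∑ Q' ∈ t.powersetCard 2, m ^ (8 - 2 * (#(P ∩ P') * #(Q ∩ Q'))) := by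
        simp only [sum_product]
        refine sum_congr rfl fun P hP => ?_
        rw [sum_comm]
        refine sum_congr rfl fun P' hP' => sum_congr rfl fun Q hQ => sum_congr rfl fun Q' hQ' => ?_
        rw [card_product_symmDiff_product (mem_powersetCard.1 hP).2 (mem_powersetCard.1 hP').2
          (mem_powersetCard.1 hQ).2 (mem_powersetCard.1 hQ').2]
    _ = _ := by
        have inner : ∀ r : ℕ, ∑ Q ∈ t.powersetCard 2, ∑ Q' ∈ t.powersetCard 2,
            m ^ (8 - 2 * (r * #(Q ∩ Q'))) = _ := fun r =>
          sum_sum_apply_card_inter_powersetCard_two t fun c => m ^ (8 - 2 * (r * c))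
        rw [sum_sum_apply_card_inter_powersetCard_two s fun r => ∑ Q ∈ t.powersetCard 2,
          ∑ Q' ∈ t.powersetCard 2, m ^ (8 - 2 * (r * #(Q ∩ Q')))]
        simp only [inner]
        norm_num [Nat.cast_choose_two]
        ring

section Replicas

variable {N n : ℕ}

lemma gibbsWeight_curry (h : ℝ) (f : Fin N × Fin n → Spin) :
    gibbsWeight h N n (Equiv.curry _ _ _ f) = spinWeight h f := by
  rw [gibbsWeight, spinWeight, ← Real.exp_sum, ← mul_sum, Fintype.sum_prod_type]
  rfl

lemma plaquetteSum_curry (f : Fin N × Fin n → Spin) :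
    plaquetteSum N n (Equiv.curry _ _ _ f) =
      ∑ x ∈ (univ : Finset (Fin N)).powersetCard 2 ×ˢ (univ : Finset (Fin n)).powersetCard 2,
        spinMonomial (x.1 ×ˢ x.2) f := by
  rw [sum_product, ← sum_Ioi_eq_sum_powersetCard_two]
  refine sum_congr rfl fun i _ => sum_congr rfl fun j hj => ?_
  rw [← sum_Ioi_eq_sum_powersetCard_two]
  refine sum_congr rfl fun a _ => sum_congr rfl fun b hb => ?_
  rw [spinMonomial, prod_product, prod_pair (mem_Ioi.1 hj).ne, prod_pair (mem_Ioi.1 hb).ne,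
    prod_pair (mem_Ioi.1 hb).ne]
  simp only [Equiv.curry_apply, Function.curry_apply]
  ring

end Replicas

/-- Under the product Gibbs measure with weight `∝ exp(h·∑_{i,a} sᵢᵃ)` on replicated
spin configurations, the second moment of the plaquette sum equals
`N(N−1)n(n−1)·[1/4 + (1/2)(N+n−4)m⁴ + (N−2)(n−2)m⁶ + (1/4)((1/4)N(N−1)n(n−1) − (2N−3)(2n−3))m⁸]`
with `m = tanh h`. -/
theorem plaquette_sum_second_moment (N n : ℕ) (h : ℝ) :
    (∑ s : Fin N → Fin n → Spin, gibbsWeight h N n s * plaquetteSum N n s ^ 2) /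
        (∑ s : Fin N → Fin n → Spin, gibbsWeight h N n s) =
      (N : ℝ) * (N - 1) * n * (n - 1) *
        (1 / 4 + (1 / 2) * ((N : ℝ) + n - 4) * Real.tanh h ^ 4 +
          ((N : ℝ) - 2) * ((n : ℝ) - 2) * Real.tanh h ^ 6 +
          (1 / 4) * ((1 / 4) * N * (N - 1) * n * (n - 1) -
            (2 * (N : ℝ) - 3) * (2 * (n : ℝ) - 3)) * Real.tanh h ^ 8) := by
  rw [← (Equiv.curry _ _ _).sum_comp, ← (Equiv.curry _ _ _).sum_comp]
  simp only [gibbsWeight_curry, plaquetteSum_curry]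
  rw [sum_spinWeight_mul_sq_sum_spinMonomial, sum_spinWeight,
    mul_div_cancel_right₀ _ (pow_ne_zero _ (by positivity)),
    sum_sum_pow_card_product_symmDiff_product]
  simp only [card_univ, Fintype.card_fin]
end
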